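/- arXiv:1705.04037 — 2 statements merged into one kernel-verified Lean document; each statement's English description precedes it below -/
import Mathlib

section
/- Let S be an uncountable set and let X^s = βℕ for every s ∈ S. There exists a base point a = (a^s)_{s∈S} ∈ ∏_{s∈S} βℕ such that, for the Σ-product X_a = Σ_{s∈S} X^s(a), the following holds: whenever Z is a dense subspace of X_a (with the subspace topology), no point x ∈ Z is a W-point of Z. In particular, no point of X_a is a W-point of X_a. -/
/-!
Take the base point constantly equal to a cluster point `u` of `ℕ` in `βℕ`. A point `x` of
the Σ-product agrees with the base point at some coordinate `s`, and moving only that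
coordinate shows that every neighbourhood of `x` contains points whose `s`-coordinate is some
`k ∈ ℕ` with `k` arbitrarily large; since these `k` are isolated in `βℕ`, the same holds in any
dense subspace containing `x`. Against a strategy of player I, player II can therefore play two
interleaved games whose `s`-coordinates run through two disjoint subsets of `ℕ`. If the
strategy won both, the `s`-coordinate of `x` would lie in the closures of both sets, but
disjoint subsets of `ℕ` have disjoint closures in `βℕ`.
-/

open Filter Set Topology

/-- `x` is a W-point: player I has a winning strategy in Gruenhage's game G(x), where
player I chooses open sets containing `x` and player II picks points in them; player I
wins when `x` is an accumulation point (cluster point) of the resulting sequence. -/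
def IsWPoint {X : Type*} [TopologicalSpace X] (x : X) : Prop :=
  ∃ σ : List X → Set X,
    (∀ h : List X, IsOpen (σ h) ∧ x ∈ σ h) ∧
    ∀ p : ℕ → X,
      (∀ n : ℕ, p n ∈ σ (List.ofFn fun i : Fin n => p i)) →
      MapClusterPt x atTop p

section StoneCech

variable {α : Type*} [TopologicalSpace α] [DiscreteTopology α]

open Classical in
theorem closure_image_stoneCechUnit_eq_preimage (A : Set α) :
    closure (stoneCechUnit '' A) =
      stoneCechExtend (continuous_of_discreteTopology (f := fun a => decide (a ∈ A))) ⁻¹'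
        {true} := by
  set g := stoneCechExtend (continuous_of_discreteTopology (f := fun a => decide (a ∈ A)))
  have hg : Continuous g := continuous_stoneCechExtend _
  refine (closure_minimal ?_ ((isClosed_discrete _).preimage hg)).antisymm fun z hz => ?_
  · rintro _ ⟨a, ha, rfl⟩
    simp [g, ha]
  · refine mem_closure_iff.2 fun U hU hzU => ?_
    obtain ⟨a, haU, ha⟩ := denseRange_stoneCechUnit.exists_mem_open
      (hU.inter ((isOpen_discrete _).preimage hg)) ⟨z, hzU, hz⟩
    exact ⟨stoneCechUnit a, haU, a, by simpa [g] using ha, rfl⟩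

theorem isOpen_closure_image_stoneCechUnit (A : Set α) :
    IsOpen (closure (stoneCechUnit '' A)) := by
  rw [closure_image_stoneCechUnit_eq_preimage]
  exact (isOpen_discrete _).preimage (continuous_stoneCechExtend _)

theorem stoneCechUnit_mem_closure_image_iff {A : Set α} {a : α} :
    stoneCechUnit a ∈ closure (stoneCechUnit '' A) ↔ a ∈ A := by
  simp [closure_image_stoneCechUnit_eq_preimage]

theorem isOpen_singleton_stoneCechUnit (a : α) : IsOpen {stoneCechUnit a} := by
  simpa using isOpen_closure_image_stoneCechUnit {a}

theorem disjoint_closure_image_stoneCechUnit {A B : Set α} (h : Disjoint A B) :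
    Disjoint (closure (stoneCechUnit '' A)) (closure (stoneCechUnit '' B)) := by
  refine Set.disjoint_iff.2 fun z hz => ?_
  obtain ⟨a, haA, haB⟩ := denseRange_stoneCechUnit.exists_mem_open
    ((isOpen_closure_image_stoneCechUnit A).inter (isOpen_closure_image_stoneCechUnit B))
    ⟨z, hz⟩
  exact h.ne_of_mem (stoneCechUnit_mem_closure_image_iff.1 haA)
    (stoneCechUnit_mem_closure_image_iff.1 haB) rfl

end StoneCech

theorem exists_interleaved_plays {Y : Type*} (P : List Y → Y → ℕ → Prop)
    (hP : ∀ l b, ∃ y k, b < k ∧ P l y k) :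
    ∃ (p q : ℕ → Y) (m n : ℕ → ℕ),
      (∀ i, P (List.ofFn fun j : Fin i => p j) (p i) (m i)) ∧
      (∀ i, P (List.ofFn fun j : Fin i => q j) (q i) (n i)) ∧ Disjoint (range m) (range n) := by
  choose y k hlt hP using hP
  -- the state after `i` rounds: both plays so far and the last label used
  let st : ℕ → List Y × List Y × ℕ := fun i => Nat.rec ([], [], 0)
    (fun _ s => (s.1 ++ [y s.1 s.2.2], s.2.1 ++ [y s.2.1 (k s.1 s.2.2)],
      k s.2.1 (k s.1 s.2.2))) i
  let m i := k (st i).1 (st i).2.2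
  let n i := k (st i).2.1 (m i)
  have hp : ∀ i, (st i).1 = List.ofFn fun j : Fin i => y (st j).1 (st j).2.2 := by
    intro i
    induction i with
    | zero => rfl
    | succ i ih => simp only [List.ofFn_succ_last, Fin.val_castSucc, Fin.val_last, ← ih]; rfl
  have hq : ∀ i, (st i).2.1 = List.ofFn fun j : Fin i => y (st j).2.1 (m j) := by
    intro i
    induction i with
    | zero => rfl
    | succ i ih => simp only [List.ofFn_succ_last, Fin.val_castSucc, Fin.val_last, ← ih]; rfl
  have hmn : ∀ i, m i < n i := fun i => hlt _ _
  have hnm : ∀ i, n i < m (i + 1) := fun i => hlt _ _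
  have hm : StrictMono m := strictMono_nat_of_lt_succ fun i => (hmn i).trans (hnm i)
  refine ⟨fun i => y (st i).1 (st i).2.2, fun i => y (st i).2.1 (m i), m, n,
    fun i => hp i ▸ hP _ _, fun i => hq i ▸ hP _ _, disjoint_range_iff.2 fun i j => ?_⟩
  rcases le_or_gt i j with hij | hji
  · exact ((hm.monotone hij).trans_lt (hmn j)).ne
  · exact ((hnm j).trans_le (hm.monotone hji)).ne'

theorem not_isWPoint_of_frequently_stoneCechUnit {Y : Type*} [TopologicalSpace Y] {y : Y}
    {f : Y → StoneCech ℕ} (hf : ContinuousAt f y)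
    (h : ∀ U ∈ 𝓝 y, ∃ᶠ k in atTop, ∃ z ∈ U, f z = stoneCechUnit k) : ¬ IsWPoint y := by
  rintro ⟨σ, hσ, hwin⟩
  have hmove : ∀ l b, ∃ z k, b < k ∧ z ∈ σ l ∧ f z = stoneCechUnit k := fun l b => by
    obtain ⟨k, hbk, z, hz, hfz⟩ :=
      frequently_atTop'.1 (h _ ((hσ l).1.mem_nhds (hσ l).2)) b
    exact ⟨z, k, hbk, hz, hfz⟩
  obtain ⟨p, q, m, n, hp, hq, hmn⟩ := exists_interleaved_plays _ hmove
  have mem_closure_labels : ∀ (r : ℕ → Y) (c : ℕ → ℕ),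
      (∀ i, r i ∈ σ (List.ofFn fun j : Fin i => r j) ∧ f (r i) = stoneCechUnit (c i)) →
      f y ∈ closure (stoneCechUnit '' range c) := fun r c hr => by
    refine isClosed_closure.mem_of_mapClusterPt
      ((hwin r fun i => (hr i).1).continuousAt_comp hf) (Eventually.of_forall fun i => ?_)
    exact subset_closure ⟨c i, mem_range_self i, (hr i).2.symm⟩
  exact (disjoint_closure_image_stoneCechUnit hmn).ne_of_mem
    (mem_closure_labels p m hp) (mem_closure_labels q n hq) rfl

theorem Dense.frequently_exists_mem_nhds_subtype {X T ι : Type*} [TopologicalSpace X]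
    [TopologicalSpace T] {Z : Set X} (hZ : Dense Z) {f : X → T} (hf : Continuous f)
    {l : Filter ι} {e : ι → T} (he : ∀ i, IsOpen {e i}) {x : Z}
    (h : ∀ W ∈ 𝓝 (x : X), ∃ᶠ i in l, ∃ y ∈ W, f y = e i) :
    ∀ U ∈ 𝓝 x, ∃ᶠ i in l, ∃ z ∈ U, f z = e i := by
  intro U hU
  obtain ⟨W, hW, hWU⟩ := (mem_nhds_subtype Z x U).1 hU
  refine (h _ (interior_mem_nhds.2 hW)).mono fun i ⟨y, hyW, hy⟩ => ?_
  obtain ⟨z, hzZ, hzW, hz⟩ :=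
    hZ.exists_mem_open (isOpen_interior.inter ((he i).preimage hf)) ⟨y, hyW, hy⟩
  exact ⟨⟨z, hzZ⟩, hWU (show z ∈ W from interior_subset hzW), hz⟩

abbrev SigmaProduct {S : Type*} (X : S → Type*) (a : ∀ s, X s) : Type _ :=
  {x : ∀ s, X s // {s | x s ≠ a s}.Countable}

namespace SigmaProduct

variable {S : Type*} {X : S → Type*} {a : ∀ s, X s}

theorem exists_apply_eq [Uncountable S] (x : SigmaProduct X a) : ∃ s, x.1 s = a s := by
  by_contra! h
  exact not_countable_univ (x.2.mono fun s _ => h s)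

open Classical in
noncomputable def update (x : SigmaProduct X a) (s : S) (v : X s) : SigmaProduct X a :=
  ⟨Function.update x.1 s v, (x.2.insert s).mono fun t ht => by
    rcases eq_or_ne t s with rfl | hts
    · exact mem_insert _ _
    · exact mem_insert_of_mem _ (by simpa [Function.update_of_ne hts] using ht)⟩

@[simp]
theorem update_apply_self (x : SigmaProduct X a) (s : S) (v : X s) :
    (x.update s v).1 s = v := by
  simp [update]

@[simp]
theorem update_eq_self (x : SigmaProduct X a) (s : S) : x.update s (x.1 s) = x :=
  Subtype.ext (by simp [update])

variable [∀ s, TopologicalSpace (X s)]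

theorem continuous_update (x : SigmaProduct X a) (s : S) : Continuous (x.update s) := by
  classical
  exact (continuous_const.update s continuous_id).subtype_mk _

theorem frequently_exists_mem_apply_eq {ι : Type*} {l : Filter ι} {x : SigmaProduct X a} {s : S}
    {e : ι → X s} (h : MapClusterPt (x.1 s) l e) {W : Set (SigmaProduct X a)}
    (hW : W ∈ 𝓝 x) :
    ∃ᶠ i in l, ∃ y ∈ W, y.1 s = e i := by
  have hN : x.update s ⁻¹' W ∈ 𝓝 (x.1 s) :=
    (continuous_update x s).continuousAt.preimage_mem_nhds (by rwa [update_eq_self])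
  exact (mapClusterPt_iff_frequently.1 h _ hN).mono fun i hi => ⟨_, hi, update_apply_self ..⟩

end SigmaProduct

/-- For an uncountable index set `S`, there is a base point `a` such that in the
Σ-product of copies of βℕ with base point `a`, no point of any dense subspace `Z` is a
W-point of `Z`; in particular no point of the Σ-product is a W-point. -/
theorem sigmaProduct_stoneCech_no_WPoints {S : Type*} [Uncountable S] :
    ∃ a : S → StoneCech ℕ,
      (∀ Z : Set {x : S → StoneCech ℕ // {s : S | x s ≠ a s}.Countable},
        Dense Z → ∀ x : Z, ¬ IsWPoint x) ∧
      ∀ x : {x : S → StoneCech ℕ // {s : S | x s ≠ a s}.Countable}, ¬ IsWPoint x := by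
  obtain ⟨u, hu⟩ :=
    exists_clusterPt_of_compactSpace (map (stoneCechUnit : ℕ → StoneCech ℕ) atTop)
  have hfreq (x : SigmaProduct (fun _ : S => StoneCech ℕ) fun _ => u) :
      ∃ s, ∀ W ∈ 𝓝 x, ∃ᶠ k in atTop, ∃ y ∈ W, y.1 s = stoneCechUnit k := by
    obtain ⟨s, hs⟩ := x.exists_apply_eq
    exact ⟨s, fun W => SigmaProduct.frequently_exists_mem_apply_eq (by rw [hs]; exact hu)⟩
  refine ⟨fun _ => u, fun Z hZ x => ?_, fun x => ?_⟩
  · obtain ⟨s, hs⟩ := hfreq x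
    have hcoord :
        Continuous fun y : SigmaProduct (fun _ : S => StoneCech ℕ) (fun _ => u) => y.1 s :=
      (continuous_apply s).comp continuous_subtype_val
    exact not_isWPoint_of_frequently_stoneCechUnit (hcoord.comp continuous_subtype_val).continuousAt
      (hZ.frequently_exists_mem_nhds_subtype hcoord isOpen_singleton_stoneCechUnit hs)
  · obtain ⟨s, hs⟩ := hfreq x
    exact not_isWPoint_of_frequently_stoneCechUnit
      ((continuous_apply s).comp continuous_subtype_val).continuousAt hs
end

section
/- A topological space X is a Baire space if and only if player β does not have a winning strategy in the Choquet game 𝒢(X) played on X. -/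
open Filter Set Topology


/-- A legal history in a game where players alternately choose nonempty open sets
forming a decreasing sequence. -/
def LegalHistory {X : Type*} [TopologicalSpace X] (l : List (Set X)) : Prop :=
  (∀ U ∈ l, IsOpen U ∧ U.Nonempty) ∧ l.Chain' fun U V => V ⊆ U

/-- A winning strategy for player β (who moves first, i.e. at even 0-indexed positions)
in the Choquet game on `X`: the strategy produces a legal move after every legal
even-length history, and whenever a run of the game follows the strategy, the
intersection of the moves is empty. -/
def IsWinningStrategyBetaChoquet (X : Type*) [TopologicalSpace X]
    (σ : List (Set X) → Set X) : Prop :=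
  (∀ l : List (Set X), LegalHistory l → l.length % 2 = 0 →
      IsOpen (σ l) ∧ (σ l).Nonempty ∧ ∀ U ∈ l.getLast?, σ l ⊆ U) ∧
  ∀ B : ℕ → Set X,
    (∀ n, IsOpen (B n) ∧ (B n).Nonempty) →
    (∀ n, B (n + 1) ⊆ B n) →
    (∀ k, B (2 * k) = σ (List.ofFn fun i : Fin (2 * k) => B i)) →
    (⋂ n, B n) = ∅

/-!
If `X` is not Baire, fix dense open sets `gₙ` and a nonempty open `U` disjoint from `⋂ gₙ`;
β wins by opening with `U ∩ g₀` and answering every move `V` of α in round `k` with `V ∩ gₖ`.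

Conversely, let `σ` be a winning strategy for β in a Baire space. At every position where α is
to move, Zorn's lemma gives a maximal family of moves of α whose `σ`-responses are pairwise
disjoint, and maximality makes the union of these responses dense in the last move. Iterating
yields levels of positions whose last moves are pairwise disjoint open sets, with unions `Wₙ`
dense in β's opening move. A point `x` of that opening move lying in every `Wₙ` picks out a
single branch through the levels, i.e. a run following `σ` all of whose moves contain `x`.
-/

theorem exists_maximal_pairwiseDisjoint {α β : Type*} (S : Set α) (f : α → Set β) :
    ∃ A, Maximal (fun A => A ⊆ S ∧ A.PairwiseDisjoint f) A :=
  zorn_subset _ fun c hcS hc => ⟨⋃₀ c, ⟨sUnion_subset fun _ hA => (hcS hA).1,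
    (hc.pairwiseDisjoint_sUnion f).2 fun _ hA => (hcS hA).2⟩, fun _ => subset_sUnion_of_mem⟩

theorem BaireSpace.nonempty_inter_iInter {X : Type*} [TopologicalSpace X] [BaireSpace X]
    {U : Set X} {W : ℕ → Set X} (hU : IsOpen U) (hUne : U.Nonempty)
    (hW : ∀ n, IsOpen (W n)) (hUW : ∀ n, U ⊆ closure (W n)) : (U ∩ ⋂ n, W n).Nonempty := by
  by_contra hempty
  have hfrontier : U ⊆ ⋃ n, frontier (W n) := by
    intro x hx
    obtain ⟨n, hn⟩ : ∃ n, x ∉ W n := by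
      by_contra! h
      exact hempty ⟨x, hx, mem_iInter.2 h⟩
    exact mem_iUnion.2 ⟨n, (hW n).frontier_eq ▸ ⟨hUW n hx, hn⟩⟩
  refine not_isMeagre_of_isOpen hU hUne (IsMeagre.mono hfrontier (isMeagre_iUnion fun n => ?_))
  refine IsNowhereDense.isMeagre ((isClosed_frontier.isNowhereDense_iff).2 ?_)
  rw [← frontier_compl]
  exact interior_frontier (hW n).isClosed_compl

theorem exists_open_dense_of_not_baireSpace {X : Type*} [TopologicalSpace X]
    (h : ¬ BaireSpace X) :
    ∃ g : ℕ → Set X, (∀ n, IsOpen (g n)) ∧ (∀ n, Dense (g n)) ∧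
      ∃ U, IsOpen U ∧ U.Nonempty ∧ U ∩ ⋂ n, g n = ∅ := by
  by_contra! hg
  exact h ⟨fun g hgo hgd => dense_iff_inter_open.2 fun U hU hUne => hg g hgo hgd U hU hUne⟩

namespace ChoquetGame

section Runs

variable {X : Type*}

def run (σ τ : List (Set X) → Set X) (m : ℕ) : Set X :=
  (if Even m then σ else τ) (List.ofFn fun i : Fin m => run σ τ i)

def history (σ τ : List (Set X) → Set X) (m : ℕ) : List (Set X) :=
  List.ofFn fun i : Fin m => run σ τ i

variable {σ τ : List (Set X) → Set X}

theorem run_eq (m : ℕ) : run σ τ m = (if Even m then σ else τ) (history σ τ m) := by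
  rw [run, history]

theorem history_succ (m : ℕ) : history σ τ (m + 1) = history σ τ m ++ [run σ τ m] :=
  List.ofFn_succ_last

end Runs

variable {X : Type*} [TopologicalSpace X]

def legalMoves (l : List (Set X)) : Set (Set X) :=
  {V | IsOpen V ∧ V.Nonempty ∧ ∀ U ∈ l.getLast?, V ⊆ U}

theorem mem_legalMoves_iff {l : List (Set X)} {V : Set X} :
    V ∈ legalMoves l ↔ IsOpen V ∧ V.Nonempty ∧ V ⊆ l.getLastD univ := by
  rcases l.eq_nil_or_concat' with rfl | ⟨l, U, rfl⟩ <;> simp [legalMoves]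

theorem _root_.LegalHistory.nil : LegalHistory ([] : List (Set X)) :=
  ⟨by simp, List.isChain_nil⟩

theorem _root_.LegalHistory.concat {l : List (Set X)} {V : Set X} (hl : LegalHistory l)
    (hV : V ∈ legalMoves l) : LegalHistory (l ++ [V]) := by
  refine ⟨fun U hU => ?_, List.isChain_append.2 ⟨hl.2, List.isChain_singleton _, ?_⟩⟩
  · rcases List.mem_append.1 hU with hU | hU
    · exact hl.1 U hU
    · exact (List.mem_singleton.1 hU) ▸ ⟨hV.1, hV.2.1⟩
  · simpa using hV.2.2

theorem _root_.LegalHistory.isOpen_getLastD {l : List (Set X)} (hl : LegalHistory l) :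
    IsOpen (l.getLastD univ) := by
  rcases l.eq_nil_or_concat' with rfl | ⟨l, U, rfl⟩
  · exact isOpen_univ
  · simpa using (hl.1 U (by simp)).1

/-- `r` is the parity of the history lengths at which the strategy moves: `0` for β, `1` for α. -/
def IsLegalStrategy (σ : List (Set X) → Set X) (r : ℕ) : Prop :=
  ∀ l, LegalHistory l → l.length % 2 = r → σ l ∈ legalMoves l

variable {σ τ : List (Set X) → Set X}

theorem run_mem_legalMoves (hσ : IsLegalStrategy σ 0) (hτ : IsLegalStrategy τ 1) {m : ℕ}
    (hm : LegalHistory (history σ τ m)) : run σ τ m ∈ legalMoves (history σ τ m) := by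
  have hlen : (history σ τ m).length = m := List.length_ofFn
  rw [run_eq]
  split_ifs with h
  · exact hσ _ hm (by rw [hlen]; exact Nat.even_iff.1 h)
  · exact hτ _ hm (by rw [hlen]; exact Nat.odd_iff.1 (Nat.not_even_iff_odd.1 h))

theorem legalHistory_history (hσ : IsLegalStrategy σ 0) (hτ : IsLegalStrategy τ 1) (m : ℕ) :
    LegalHistory (history σ τ m) := by
  induction m with
  | zero => exact LegalHistory.nil
  | succ m ih => exact history_succ m ▸ ih.concat (run_mem_legalMoves hσ hτ ih)

theorem antitone_run (hσ : IsLegalStrategy σ 0) (hτ : IsLegalStrategy τ 1) :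
    Antitone (run σ τ) := by
  refine antitone_nat_of_succ_le fun m => ?_
  have hlegal := legalHistory_history hσ hτ (m + 1)
  have hsub := (mem_legalMoves_iff.1 (run_mem_legalMoves hσ hτ hlegal)).2.2
  rwa [history_succ, List.getLastD_concat] at hsub

theorem _root_.IsWinningStrategyBetaChoquet.iInter_run_eq_empty
    (hσ : IsWinningStrategyBetaChoquet X σ) (hτ : IsLegalStrategy τ 1) :
    ⋂ n, run σ τ n = ∅ :=
  hσ.2 _
    (fun n => (run_mem_legalMoves hσ.1 hτ (legalHistory_history hσ.1 hτ n)).imp_right And.left)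
    (fun n => antitone_run hσ.1 hτ n.le_succ)
    (fun k => by rw [run_eq, if_pos (even_two_mul k)]; rfl)

def shrinkingStrategy (U : Set X) (g : ℕ → Set X) (l : List (Set X)) : Set X :=
  l.getLastD U ∩ g (l.length / 2)

theorem isWinningStrategyBetaChoquet_shrinkingStrategy {U : Set X} {g : ℕ → Set X}
    (hU : IsOpen U) (hUne : U.Nonempty) (hgo : ∀ n, IsOpen (g n)) (hgd : ∀ n, Dense (g n))
    (hUg : U ∩ ⋂ n, g n = ∅) : IsWinningStrategyBetaChoquet X (shrinkingStrategy U g) := by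
  refine ⟨fun l hl _ => ?_, fun B _ _ hB => eq_empty_of_forall_notMem fun x hx => ?_⟩
  · have hlast : IsOpen (l.getLastD U) ∧ (l.getLastD U).Nonempty := by
      rcases l.eq_nil_or_concat' with rfl | ⟨l, V, rfl⟩
      · exact ⟨hU, hUne⟩
      · simpa using hl.1 V (by simp)
    refine ⟨hlast.1.inter (hgo _), (hgd _).inter_open_nonempty _ hlast.1 hlast.2, fun V hV => ?_⟩
    rw [shrinkingStrategy, List.getLastD_eq_getLast?, Option.mem_def.1 hV]
    exact inter_subset_left
  · have hxB (k : ℕ) : x ∈ shrinkingStrategy U g (List.ofFn fun i : Fin (2 * k) => B i) :=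
      hB k ▸ mem_iInter.1 hx (2 * k)
    have hxU : x ∈ U := by simpa [shrinkingStrategy] using (hxB 0).1
    have hxg (k : ℕ) : x ∈ g k := by simpa [shrinkingStrategy] using (hxB k).2
    exact hUg.subset ⟨hxU, mem_iInter.2 hxg⟩

section Tree

variable (σ : List (Set X) → Set X)

def maxDisjointMoves (p : List (Set X)) : Set (Set X) :=
  (exists_maximal_pairwiseDisjoint (legalMoves p) fun V => σ (p ++ [V])).choose

def level : ℕ → Set (List (Set X))
  | 0 => {[σ []]}
  | n + 1 => ⋃ p ∈ level n, (fun V => p ++ [V] ++ [σ (p ++ [V])]) '' maxDisjointMoves σ p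

def levelSet (n : ℕ) : Set X :=
  ⋃ p ∈ level σ n, p.getLastD univ

open Classical in
/-- α's strategy steering the run towards `x`; the fallback move only serves to keep it legal. -/
def followPoint (x : X) (p : List (Set X)) : Set X :=
  if h : ∃ V ∈ maxDisjointMoves σ p, x ∈ σ (p ++ [V]) then h.choose else p.getLastD univ

variable {σ}

theorem maximal_maxDisjointMoves (p : List (Set X)) :
    Maximal (fun A => A ⊆ legalMoves p ∧ A.PairwiseDisjoint fun V => σ (p ++ [V]))
      (maxDisjointMoves σ p) :=
  (exists_maximal_pairwiseDisjoint _ _).choose_spec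

theorem response_mem_legalMoves (hσ : IsLegalStrategy σ 0) {p : List (Set X)}
    (hp : LegalHistory p) (hodd : p.length % 2 = 1) {V : Set X} (hV : V ∈ legalMoves p) :
    σ (p ++ [V]) ∈ legalMoves (p ++ [V]) :=
  hσ _ (hp.concat hV) (by simp; omega)

theorem response_subset (hσ : IsLegalStrategy σ 0) {p : List (Set X)}
    (hp : LegalHistory p) (hodd : p.length % 2 = 1) {V : Set X} (hV : V ∈ legalMoves p) :
    σ (p ++ [V]) ⊆ V := by
  simpa using (mem_legalMoves_iff.1 (response_mem_legalMoves hσ hp hodd hV)).2.2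

theorem legalHistory_of_mem_level (hσ : IsLegalStrategy σ 0) {n : ℕ} {p : List (Set X)}
    (hp : p ∈ level σ n) : LegalHistory p ∧ p.length = 2 * n + 1 := by
  induction n generalizing p with
  | zero =>
    obtain rfl := mem_singleton_iff.1 hp
    exact ⟨LegalHistory.nil.concat (hσ [] .nil rfl), rfl⟩
  | succ n ih =>
    simp only [level, mem_iUnion, mem_image] at hp
    obtain ⟨q, hq, V, hV, rfl⟩ := hp
    obtain ⟨hlegal, hlen⟩ := ih hq
    have hodd : q.length % 2 = 1 := by omega
    have hV' := (maximal_maxDisjointMoves q).prop.1 hV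
    exact ⟨(hlegal.concat hV').concat (response_mem_legalMoves hσ hlegal hodd hV'),
      by simp [hlen]; ring⟩

theorem subset_closure_iUnion_responses (hσ : IsLegalStrategy σ 0) {p : List (Set X)}
    (hp : LegalHistory p) (hodd : p.length % 2 = 1) :
    p.getLastD univ ⊆ closure (⋃ V ∈ maxDisjointMoves σ p, σ (p ++ [V])) := by
  refine fun x hx => mem_closure_iff.2 fun O hO hxO => not_not.1 fun hdisj => ?_
  rw [not_nonempty_iff_eq_empty] at hdisj
  set W := O ∩ p.getLastD univ
  have hW : W ∈ legalMoves p :=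
    mem_legalMoves_iff.2 ⟨hO.inter hp.isOpen_getLastD, ⟨x, hxO, hx⟩, inter_subset_right⟩
  have hWO : σ (p ++ [W]) ⊆ O := (response_subset hσ hp hodd hW).trans inter_subset_left
  have hWmem : W ∈ maxDisjointMoves σ p := by
    refine (maximal_maxDisjointMoves p).mem_of_prop_insert
      ⟨insert_subset hW (maximal_maxDisjointMoves p).prop.1,
        (maximal_maxDisjointMoves p).prop.2.insert fun V hV _ => ?_⟩
    exact disjoint_of_subset hWO (subset_biUnion_of_mem (u := fun V => σ (p ++ [V])) hV)
      (disjoint_iff_inter_eq_empty.2 hdisj)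
  obtain ⟨y, hy⟩ := (response_mem_legalMoves hσ hp hodd hW).2.1
  exact hdisj.subset ⟨hWO hy, mem_biUnion hWmem hy⟩

theorem pairwiseDisjoint_level (hσ : IsLegalStrategy σ 0) (n : ℕ) :
    (level σ n).PairwiseDisjoint (·.getLastD univ) := by
  induction n with
  | zero => exact pairwiseDisjoint_singleton _ _
  | succ n ih =>
    refine PairwiseDisjoint.biUnion (ih.mono_on fun p hp => iSup₂_le ?_) fun p hp => ?_
    · rintro _ ⟨V, hV, rfl⟩
      obtain ⟨hlegal, hlen⟩ := legalHistory_of_mem_level hσ hp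
      have hV' := (maximal_maxDisjointMoves p).prop.1 hV
      simpa using (response_subset hσ hlegal (by omega) hV').trans (mem_legalMoves_iff.1 hV').2.2
    · have hinj : (maxDisjointMoves σ p).InjOn fun V => p ++ [V] ++ [σ (p ++ [V])] :=
        fun V _ W _ h => by simpa using (List.append_inj' h rfl).1
      rw [hinj.pairwiseDisjoint_image]
      simpa [Function.comp_def] using (maximal_maxDisjointMoves p).prop.2

theorem isOpen_levelSet (hσ : IsLegalStrategy σ 0) (n : ℕ) : IsOpen (levelSet σ n) :=
  isOpen_biUnion fun _ hp => (legalHistory_of_mem_level hσ hp).1.isOpen_getLastD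

theorem levelSet_subset_closure_levelSet_succ (hσ : IsLegalStrategy σ 0) (n : ℕ) :
    levelSet σ n ⊆ closure (levelSet σ (n + 1)) := by
  refine iUnion₂_subset fun p hp => ?_
  obtain ⟨hlegal, hlen⟩ := legalHistory_of_mem_level hσ hp
  refine (subset_closure_iUnion_responses hσ hlegal (by omega)).trans (closure_mono ?_)
  refine iUnion₂_subset fun V hV => ?_
  have hchild : p ++ [V] ++ [σ (p ++ [V])] ∈ level σ (n + 1) :=
    mem_biUnion hp (mem_image_of_mem _ hV)
  simpa [levelSet] using subset_biUnion_of_mem (u := fun q => q.getLastD univ) hchild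

theorem subset_closure_levelSet (hσ : IsLegalStrategy σ 0) (n : ℕ) :
    σ [] ⊆ closure (levelSet σ n) := by
  induction n with
  | zero => simpa [levelSet, level] using subset_closure
  | succ n ih =>
    exact ih.trans (closure_minimal (levelSet_subset_closure_levelSet_succ hσ n) isClosed_closure)

theorem isLegalStrategy_followPoint (x : X) :
    IsLegalStrategy (followPoint σ x) 1 := by
  intro p hp hodd
  rw [followPoint]
  split_ifs with h
  · exact (maximal_maxDisjointMoves p).prop.1 h.choose_spec.1
  · rcases p.eq_nil_or_concat' with rfl | ⟨l, U, rfl⟩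
    · simp at hodd
    · obtain ⟨hU, hUne⟩ := hp.1 U (by simp)
      exact mem_legalMoves_iff.2 ⟨by simpa using hU, by simpa using hUne, by simp⟩

theorem history_mem_level (hσ : IsLegalStrategy σ 0) {x : X} (hx : ∀ n, x ∈ levelSet σ n)
    (n : ℕ) : history σ (followPoint σ x) (2 * n + 1) ∈ level σ n ∧
      x ∈ run σ (followPoint σ x) (2 * n) := by
  set τ := followPoint σ x
  induction n with
  | zero =>
    have h0 : run σ τ 0 = σ [] := by rw [run_eq]; rfl
    refine ⟨by simp [h0, level, history], ?_⟩
    simpa [h0, levelSet, level] using hx 0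
  | succ n ih =>
    obtain ⟨hp, hxp⟩ := ih
    set p := history σ τ (2 * n + 1)
    have hxp' : x ∈ p.getLastD univ := by simpa [p, history_succ] using hxp
    -- `x` lies in a response at some position of level `n`, which by disjointness is `p`.
    have hex : ∃ V ∈ maxDisjointMoves σ p, x ∈ σ (p ++ [V]) := by
      obtain ⟨q', hq', hxq'⟩ := mem_iUnion₂.1 (hx (n + 1))
      simp only [level, mem_iUnion, mem_image] at hq'
      obtain ⟨q, hq, V, hV, rfl⟩ := hq'
      have hxq : x ∈ σ (q ++ [V]) := by simpa using hxq'
      obtain rfl : q = p := by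
        by_contra hne
        obtain ⟨hlegal, hlen⟩ := legalHistory_of_mem_level hσ hq
        have hV' := (maximal_maxDisjointMoves q).prop.1 hV
        have hxq_last : x ∈ q.getLastD univ :=
          (mem_legalMoves_iff.1 hV').2.2 (response_subset hσ hlegal (by omega) hV' hxq)
        exact disjoint_left.1 (pairwiseDisjoint_level hσ n hq hp hne) hxq_last hxp'
      exact ⟨V, hV, hxq⟩
    have hmove : run σ τ (2 * n + 1) = hex.choose := by
      rw [run_eq, if_neg (Nat.not_even_two_mul_add_one n)]
      exact dif_pos hex
    have hresp : run σ τ (2 * n + 1 + 1) = σ (p ++ [hex.choose]) := by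
      have heven : Even (2 * n + 1 + 1) := ⟨n + 1, by ring⟩
      rw [run_eq, if_pos heven, history_succ, hmove]
    refine ⟨?_, by simpa [hresp, mul_add] using hex.choose_spec.2⟩
    rw [show 2 * (n + 1) + 1 = 2 * n + 1 + 1 + 1 by ring, history_succ, history_succ, hresp, hmove]
    exact mem_biUnion hp (mem_image_of_mem _ hex.choose_spec.1)

end Tree

theorem not_isWinningStrategyBetaChoquet [BaireSpace X] (σ : List (Set X) → Set X) :
    ¬ IsWinningStrategyBetaChoquet X σ := by
  intro hσ
  have hσ₀ := hσ.1 [] .nil rfl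
  obtain ⟨x, -, hx⟩ := BaireSpace.nonempty_inter_iInter hσ₀.1 hσ₀.2.1 (isOpen_levelSet hσ.1)
    (subset_closure_levelSet hσ.1)
  have hτ : IsLegalStrategy (followPoint σ x) 1 := isLegalStrategy_followPoint x
  have hrun (n : ℕ) : x ∈ run σ (followPoint σ x) n :=
    antitone_run hσ.1 hτ (by omega : n ≤ 2 * n) (history_mem_level hσ.1 (mem_iInter.1 hx) n).2
  simpa [hσ.iInter_run_eq_empty hτ] using mem_iInter.2 hrun

end ChoquetGame

/-- A topological space is Baire iff player β has no winning strategy in the Choquet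
game. -/
theorem baireSpace_iff_no_winning_strategy_choquet {X : Type*} [TopologicalSpace X] :
    BaireSpace X ↔ ¬ ∃ σ : List (Set X) → Set X, IsWinningStrategyBetaChoquet X σ := by
  refine ⟨fun _ ⟨σ, hσ⟩ => ChoquetGame.not_isWinningStrategyBetaChoquet σ hσ, fun h => ?_⟩
  by_contra hB
  obtain ⟨g, hgo, hgd, U, hU, hUne, hUg⟩ := exists_open_dense_of_not_baireSpace hB
  exact h ⟨_, ChoquetGame.isWinningStrategyBetaChoquet_shrinkingStrategy hU hUne hgo hgd hUg⟩
end
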